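/- Let a_0,…,a_n be positive reals. On the open set of ℝ^{n+1} × ℝ^{n+1} of points (q,v) with q ≠ 0 and v ≠ 0, the Joachimsthal function C(q,v) = (B(q) · Σ_{α=0}^n v_α²)^{−1/2}, with B(q) = Σ_{α=0}^n q_α²/a_α, is a first integral of the geodesic spray X_1 = Σ_α v_α ∂/∂q_α − (v²/B) Σ_α (q_α/a_α) ∂/∂v_α of the metric g_1 = Σ_α a_α dq_α²: that is, Σ_{α=0}^n v_α ∂C/∂q_α − ((Σ_β v_β²)/B(q)) Σ_{α=0}^n (q_α/a_α) ∂C/∂v_α = 0 identically on this open set. -/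
import Mathlib


open Finset

/-- Partial derivative with respect to `q α` (the first group of variables)
of a function of `(q, v) ∈ ℝ^m × ℝ^m`. -/
noncomputable def pderiv1 {m : ℕ} (F : (Fin m → ℝ) → (Fin m → ℝ) → ℝ)
    (α : Fin m) (q v : Fin m → ℝ) : ℝ :=
  deriv (fun t => F (Function.update q α t) v) (q α)

/-- Partial derivative with respect to `v α` (the second group of variables)
of a function of `(q, v) ∈ ℝ^m × ℝ^m`. -/
noncomputable def pderiv2 {m : ℕ} (F : (Fin m → ℝ) → (Fin m → ℝ) → ℝ)
    (α : Fin m) (q v : Fin m → ℝ) : ℝ :=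
  deriv (fun t => F q (Function.update v α t)) (v α)

/-- The Joachimsthal function `C(q,v) = (B(q) Σ_α v_α²)^{−1/2}` with
`B(q) = Σ_α q_α²/a_α` (real power). -/
noncomputable def joachimsthalC {m : ℕ} (a : Fin m → ℝ) (q v : Fin m → ℝ) : ℝ :=
  ((∑ α, (q α) ^ 2 / a α) * ∑ α, (v α) ^ 2) ^ (-(1 / 2) : ℝ)

/-- `C` is a first integral of the geodesic spray
`X₁ = Σ_α v_α ∂/∂q_α − (v²/B) Σ_α (q_α/a_α) ∂/∂v_α`, i.e. `X₁ C = 0` on the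
open set `{q ≠ 0, v ≠ 0}`. -/
theorem joachimsthal_first_integral (n : ℕ) (hn : 1 ≤ n)
    (a : Fin (n + 1) → ℝ) (ha : ∀ α, 0 < a α)
    (q v : Fin (n + 1) → ℝ) (hq : q ≠ 0) (hv : v ≠ 0) :
    (∑ α, v α * pderiv1 (joachimsthalC a) α q v)
      - ((∑ β, (v β) ^ 2) / ∑ β, (q β) ^ 2 / a β) *
          ∑ α, (q α / a α) * pderiv2 (joachimsthalC a) α q v = 0 := by
  set B : ℝ := ∑ β, (q β) ^ 2 / a β with hBdef
  set S : ℝ := ∑ β, (v β) ^ 2 with hSdef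
  have hB : 0 < B := by
    apply Finset.sum_pos'
    · intro i _; exact div_nonneg (sq_nonneg _) (ha i).le
    · obtain ⟨i, hi⟩ := Function.ne_iff.mp hq
      have hqi : q i ≠ 0 := by simpa using hi
      exact ⟨i, Finset.mem_univ i, div_pos (by positivity) (ha i)⟩
  have hS : 0 < S := by
    apply Finset.sum_pos'
    · intro i _; positivity
    · obtain ⟨i, hi⟩ := Function.ne_iff.mp hv
      have hvi : v i ≠ 0 := by simpa using hi
      exact ⟨i, Finset.mem_univ i, by positivity⟩
  have hBS : (B * S) ≠ 0 := ne_of_gt (mul_pos hB hS)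
  set K : ℝ := (-(1 / 2) : ℝ) * (B * S) ^ ((-(1 / 2) : ℝ) - 1) with hKdef
  have hp1 : ∀ α, pderiv1 (joachimsthalC a) α q v
      = 2 * q α / a α * S * K := by
    intro α
    unfold pderiv1 joachimsthalC
    have key : ∀ t : ℝ, (∑ β, (Function.update q α t β) ^ 2 / a β)
        = t ^ 2 / a α + ∑ β ∈ Finset.univ.erase α, (q β) ^ 2 / a β := by
      intro t
      rw [← Finset.add_sum_erase _ _ (Finset.mem_univ α), Function.update_self]
      congr 1
      exact Finset.sum_congr rfl fun β hβ => by
        rw [Function.update_of_ne (Finset.ne_of_mem_erase hβ)]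
    have keyq : (q α) ^ 2 / a α + ∑ β ∈ Finset.univ.erase α, (q β) ^ 2 / a β = B := by
      rw [← key (q α)]
      simp [hBdef]
    simp only [key]
    have hf : HasDerivAt
        (fun t : ℝ => (t ^ 2 / a α + ∑ β ∈ Finset.univ.erase α, (q β) ^ 2 / a β) * S)
        (2 * q α / a α * S) (q α) := by
      have h0 : HasDerivAt (fun t : ℝ => t ^ 2) (2 * q α) (q α) := by
        simpa using hasDerivAt_pow 2 (q α)
      have := (((h0.div_const (a α)).add_const
        (∑ β ∈ Finset.univ.erase α, (q β) ^ 2 / a β)).mul_const S)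
      simpa [mul_div_assoc] using this
    have hfx : (q α) ^ 2 / a α + (∑ β ∈ Finset.univ.erase α, (q β) ^ 2 / a β) ≠ 0 := by
      rw [keyq]; exact ne_of_gt hB
    have hd := hf.rpow_const (p := (-(1 / 2) : ℝ)) (Or.inl (by rw [keyq]; exact hBS))
    rw [hd.deriv]
    rw [keyq, hKdef]
    ring
  have hp2 : ∀ α, pderiv2 (joachimsthalC a) α q v
      = 2 * v α * B * K := by
    intro α
    unfold pderiv2 joachimsthalC
    have key : ∀ t : ℝ, (∑ β, (Function.update v α t β) ^ 2)
        = t ^ 2 + ∑ β ∈ Finset.univ.erase α, (v β) ^ 2 := by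
      intro t
      rw [← Finset.add_sum_erase _ _ (Finset.mem_univ α), Function.update_self]
      congr 1
      exact Finset.sum_congr rfl fun β hβ => by
        rw [Function.update_of_ne (Finset.ne_of_mem_erase hβ)]
    have keyv : (v α) ^ 2 + ∑ β ∈ Finset.univ.erase α, (v β) ^ 2 = S := by
      rw [← key (v α)]
      simp [hSdef]
    simp only [key]
    have hf : HasDerivAt
        (fun t : ℝ => B * (t ^ 2 + ∑ β ∈ Finset.univ.erase α, (v β) ^ 2))
        (B * (2 * v α)) (v α) := by
      have h0 : HasDerivAt (fun t : ℝ => t ^ 2) (2 * v α) (v α) := by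
        simpa using hasDerivAt_pow 2 (v α)
      exact (h0.add_const (∑ β ∈ Finset.univ.erase α, (v β) ^ 2)).const_mul B
    have hd := hf.rpow_const (p := (-(1 / 2) : ℝ)) (Or.inl (by rw [keyv]; exact hBS))
    rw [hd.deriv]
    rw [keyv, hKdef]
    ring
  have e1 : (∑ α, v α * pderiv1 (joachimsthalC a) α q v)
      = 2 * S * K * ∑ α, v α * q α / a α := by
    rw [Finset.mul_sum]
    exact Finset.sum_congr rfl fun α _ => by rw [hp1]; ring
  have e2 : (∑ α, (q α / a α) * pderiv2 (joachimsthalC a) α q v)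
      = 2 * B * K * ∑ α, v α * q α / a α := by
    rw [Finset.mul_sum]
    exact Finset.sum_congr rfl fun α _ => by rw [hp2]; ring
  rw [e1, e2]
  field_simp
  ring
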